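/- Let κ > 0 and on {(x,y) ∈ ℝ² : x > y} define Λ(x,y) = ((4−κ)/κ)·(x−y)^{1−2/κ} log(x−y) + ((4−κ)/8)·(x−y)^{−2/κ}(x+y). Then (∂/∂x + ∂/∂y) Λ = (1 − κ/4)·(x−y)^{−2/κ} and (x ∂/∂x + y ∂/∂y + 2/κ − 1) Λ = ((4−κ)/κ)·(x−y)^{1−2/κ}. That is, L₁Λ = β·Z with logarithmic coupling β = 1 − κ/4, and (L₀ − 1)Λ = L₋₁Z, where Z(x,y) = (x−y)^{−2/κ} is the SLE_κ(ρ=−2) partition function. -/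
import Mathlib


/-- Logarithmic partner for SLE_κ(ρ=-2) with the correct coefficient `b = (4-κ)/8`. -/
noncomputable def Λ8 (κ x y : ℝ) : ℝ :=
  (4 - κ) / κ * (x - y) ^ (1 - 2 / κ) * Real.log (x - y)
    + (4 - κ) / 8 * (x - y) ^ (-2 / κ) * (x + y)

/-- `L₁ Λ = (1 - κ/4) Z` (logarithmic coupling `β = 1 - κ/4`) and
`(L₀ - 1) Λ = L₋₁ Z`, where `Z(x,y) = (x-y)^{-2/κ}` and `h_x + h_y = 2/κ`. -/
theorem stmt_8 (κ : ℝ) (hκ : 0 < κ) :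
    ∀ x y : ℝ, y < x →
      (deriv (fun x' => Λ8 κ x' y) x + deriv (fun y' => Λ8 κ x y') y
          = (1 - κ / 4) * (x - y) ^ (-2 / κ))
      ∧ (x * deriv (fun x' => Λ8 κ x' y) x + y * deriv (fun y' => Λ8 κ x y') y
          + (2 / κ - 1) * Λ8 κ x y
          = (4 - κ) / κ * (x - y) ^ (1 - 2 / κ)) := by
  intro x y hxy
  have h : 0 < x - y := sub_pos.mpr hxy
  have hne : x - y ≠ 0 := h.ne'
  have hκne : κ ≠ 0 := hκ.ne'
  -- x-direction
  have hu : HasDerivAt (fun x' : ℝ => x' - y) 1 x := (hasDerivAt_id x).sub_const y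
  have h1 : HasDerivAt (fun x' : ℝ => (x' - y) ^ (1 - 2 / κ))
      (1 * (1 - 2 / κ) * (x - y) ^ (1 - 2 / κ - 1)) x :=
    hu.rpow_const (Or.inl hne)
  have h2 : HasDerivAt (fun x' : ℝ => Real.log (x' - y)) (1 / (x - y)) x := hu.log hne
  have h3 : HasDerivAt (fun x' : ℝ => (x' - y) ^ (-2 / κ))
      (1 * (-2 / κ) * (x - y) ^ (-2 / κ - 1)) x :=
    hu.rpow_const (Or.inl hne)
  have h4 : HasDerivAt (fun x' : ℝ => x' + y) 1 x := (hasDerivAt_id x).add_const y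
  have hP : HasDerivAt (fun x' => Λ8 κ x' y)
      (((4 - κ) / κ * (1 * (1 - 2 / κ) * (x - y) ^ (1 - 2 / κ - 1))) * Real.log (x - y)
        + ((4 - κ) / κ * (x - y) ^ (1 - 2 / κ)) * (1 / (x - y))
        + (((4 - κ) / 8 * (1 * (-2 / κ) * (x - y) ^ (-2 / κ - 1))) * (x + y)
          + ((4 - κ) / 8 * (x - y) ^ (-2 / κ)) * 1)) x := by
    unfold Λ8
    exact ((h1.const_mul ((4 - κ) / κ)).mul h2).add ((h3.const_mul ((4 - κ) / 8)).mul h4)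
  -- y-direction
  have hv : HasDerivAt (fun y' : ℝ => x - y') (-1) y := by
    simpa using (hasDerivAt_id y).const_sub x
  have g1 : HasDerivAt (fun y' : ℝ => (x - y') ^ (1 - 2 / κ))
      (-1 * (1 - 2 / κ) * (x - y) ^ (1 - 2 / κ - 1)) y :=
    hv.rpow_const (Or.inl hne)
  have g2 : HasDerivAt (fun y' : ℝ => Real.log (x - y')) ((-1) / (x - y)) y := hv.log hne
  have g3 : HasDerivAt (fun y' : ℝ => (x - y') ^ (-2 / κ))
      (-1 * (-2 / κ) * (x - y) ^ (-2 / κ - 1)) y :=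
    hv.rpow_const (Or.inl hne)
  have g4 : HasDerivAt (fun y' : ℝ => x + y') 1 y := (hasDerivAt_id y).const_add x
  have hQ : HasDerivAt (fun y' => Λ8 κ x y')
      (((4 - κ) / κ * (-1 * (1 - 2 / κ) * (x - y) ^ (1 - 2 / κ - 1))) * Real.log (x - y)
        + ((4 - κ) / κ * (x - y) ^ (1 - 2 / κ)) * ((-1) / (x - y))
        + (((4 - κ) / 8 * (-1 * (-2 / κ) * (x - y) ^ (-2 / κ - 1))) * (x + y)
          + ((4 - κ) / 8 * (x - y) ^ (-2 / κ)) * 1)) y := by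
    unfold Λ8
    exact ((g1.const_mul ((4 - κ) / κ)).mul g2).add ((g3.const_mul ((4 - κ) / 8)).mul g4)
  -- rpow identities
  have e1 : (x - y) ^ (1 - 2 / κ - 1) = (x - y) ^ (-2 / κ) := by
    rw [show (1 - 2 / κ - 1 : ℝ) = -2 / κ by ring]
  have e2 : (x - y) ^ (1 - 2 / κ) = (x - y) * (x - y) ^ (-2 / κ) := by
    rw [show (1 - 2 / κ : ℝ) = 1 + -2 / κ by ring, Real.rpow_add h, Real.rpow_one]
  have e3 : (x - y) ^ (-2 / κ - 1) = (x - y) ^ (-2 / κ) / (x - y) := by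
    rw [Real.rpow_sub h, Real.rpow_one]
  rw [hP.deriv, hQ.deriv]
  unfold Λ8
  rw [e1, e2, e3]
  constructor
  · field_simp
    ring
  · field_simp
    ring
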